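/- arXiv:2405.20631 — 6 statements merged into one kernel-verified Lean document; each statement's English description precedes it below -/
import Mathlib

section
/- Let y_1,…,y_n : (0,∞) → ℝ be strictly increasing, let φ : ℝ → (0,∞) be a positive function, and let G : (0,∞)^n → ℝ satisfy the fixed-point identity G(β) = ∑_{i=1}^n y_i(β_i · φ(G(β))) for every β ∈ (0,∞)^n. Assume in addition: (i) for every β ∈ (0,∞)^n and every t > G(β) there exists ζ ∈ (0,∞)^n with ζ_i > β_i for all i and G(ζ) = t; and (ii) for every β ∈ (0,∞)^n and every t ≤ G(β) there exists ζ ∈ (0,∞)^n with ζ_i ≤ β_i for all i and G(ζ) = t. Then for every t_0 ∈ ℝ, the sets S_1 := {β ∈ (0,∞)^n : G(β) ≥ t_0} and S_2 := {β ∈ (0,∞)^n : t_0 ≤ ∑_{i=1}^n y_i(β_i · φ(t_0))} are equal. -/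
/-!
On the level set `G = t₀` the fixed-point identity reads `t₀ = ∑ i, y i (ζ i * φ t₀)`, with the
factor `φ t₀` frozen, so the level set lies on the boundary of `S₂`. If `G β ≥ t₀`, hypothesis (ii)
lowers `β` to a point of that level set, and monotonicity of the `y i` puts `β` in `S₂`. If
`G β < t₀`, hypothesis (i) raises every coordinate of `β` strictly to such a point, and strict
monotonicity pushes `β` out of `S₂`.
-/

open Finset

variable {ι : Type*} [Fintype ι] {y : ι → ℝ → ℝ} {c : ℝ} {β ζ : ι → ℝ}

theorem sum_apply_mul_le_of_le (hy : ∀ i, MonotoneOn (y i) (Set.Ioi 0)) (hc : 0 < c)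
    (hβ : ∀ i, 0 < β i) (hle : ∀ i, β i ≤ ζ i) :
    ∑ i, y i (β i * c) ≤ ∑ i, y i (ζ i * c) :=
  sum_le_sum fun i _ => hy i (mul_pos (hβ i) hc) (mul_pos ((hβ i).trans_le (hle i)) hc)
    (mul_le_mul_of_nonneg_right (hle i) hc.le)

theorem sum_apply_mul_lt_of_lt [Nonempty ι] (hy : ∀ i, StrictMonoOn (y i) (Set.Ioi 0))
    (hc : 0 < c) (hβ : ∀ i, 0 < β i) (hlt : ∀ i, β i < ζ i) :
    ∑ i, y i (β i * c) < ∑ i, y i (ζ i * c) :=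
  sum_lt_sum_of_nonempty univ_nonempty fun i _ => hy i (mul_pos (hβ i) hc)
    (mul_pos ((hβ i).trans (hlt i)) hc) (mul_lt_mul_of_pos_right (hlt i) hc)

section FixedPoint

variable {φ : ℝ → ℝ} {G : (ι → ℝ) → ℝ}

theorem le_sum_of_le_fixedPoint (hy : ∀ i, MonotoneOn (y i) (Set.Ioi 0)) (hφ : ∀ t, 0 < φ t)
    (hfix : ∀ β : ι → ℝ, (∀ i, 0 < β i) → G β = ∑ i, y i (β i * φ (G β)))
    (hdown : ∀ β : ι → ℝ, (∀ i, 0 < β i) → ∀ t ≤ G β,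
      ∃ ζ : ι → ℝ, (∀ i, 0 < ζ i) ∧ (∀ i, ζ i ≤ β i) ∧ G ζ = t)
    {t₀ : ℝ} (hβ : ∀ i, 0 < β i) (ht : t₀ ≤ G β) :
    t₀ ≤ ∑ i, y i (β i * φ t₀) := by
  obtain ⟨ζ, hζ, hζβ, rfl⟩ := hdown β hβ t₀ ht
  calc G ζ = ∑ i, y i (ζ i * φ (G ζ)) := hfix ζ hζ
    _ ≤ ∑ i, y i (β i * φ (G ζ)) := sum_apply_mul_le_of_le hy (hφ _) hζ hζβ

theorem le_fixedPoint_of_le_sum (hy : ∀ i, StrictMonoOn (y i) (Set.Ioi 0)) (hφ : ∀ t, 0 < φ t)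
    (hfix : ∀ β : ι → ℝ, (∀ i, 0 < β i) → G β = ∑ i, y i (β i * φ (G β)))
    (hup : ∀ β : ι → ℝ, (∀ i, 0 < β i) → ∀ t > G β,
      ∃ ζ : ι → ℝ, (∀ i, 0 < ζ i) ∧ (∀ i, β i < ζ i) ∧ G ζ = t)
    {t₀ : ℝ} (hβ : ∀ i, 0 < β i) (ht : t₀ ≤ ∑ i, y i (β i * φ t₀)) :
    t₀ ≤ G β := by
  by_contra! hlt
  cases isEmpty_or_nonempty ι with
  | inl _ =>
    have hG : G β = 0 := by simpa using hfix β hβ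
    simp only [univ_eq_empty, sum_empty] at ht
    linarith
  | inr _ =>
    obtain ⟨ζ, hζ, hβζ, rfl⟩ := hup β hβ t₀ hlt
    have := calc ∑ i, y i (β i * φ (G ζ)) < ∑ i, y i (ζ i * φ (G ζ)) :=
          sum_apply_mul_lt_of_lt hy (hφ _) hβ hβζ
      _ = G ζ := (hfix ζ hζ).symm
    linarith

end FixedPoint

/-- The superlevel set `S₁ = {β : G β ≥ t₀}` of the fixed-point function `G`
coincides with the set `S₂ = {β : t₀ ≤ ∑ i, y i (β i * φ t₀)}`. -/
theorem stmt_2 (n : ℕ) (y : Fin n → ℝ → ℝ)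
    (hy : ∀ i, StrictMonoOn (y i) (Set.Ioi 0))
    (φ : ℝ → ℝ) (hφ : ∀ t, 0 < φ t)
    (G : (Fin n → ℝ) → ℝ)
    (hfix : ∀ β : Fin n → ℝ, (∀ i, 0 < β i) → G β = ∑ i, y i (β i * φ (G β)))
    (hup : ∀ β : Fin n → ℝ, (∀ i, 0 < β i) → ∀ t > G β,
      ∃ ζ : Fin n → ℝ, (∀ i, 0 < ζ i) ∧ (∀ i, β i < ζ i) ∧ G ζ = t)
    (hdown : ∀ β : Fin n → ℝ, (∀ i, 0 < β i) → ∀ t ≤ G β,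
      ∃ ζ : Fin n → ℝ, (∀ i, 0 < ζ i) ∧ (∀ i, ζ i ≤ β i) ∧ G ζ = t)
    (t₀ : ℝ) :
    {β : Fin n → ℝ | (∀ i, 0 < β i) ∧ t₀ ≤ G β} =
      {β : Fin n → ℝ | (∀ i, 0 < β i) ∧ t₀ ≤ ∑ i, y i (β i * φ t₀)} := by
  ext β
  refine and_congr_right fun hβ => ⟨fun ht => ?_, fun ht => ?_⟩
  · exact le_sum_of_le_fixedPoint (fun i => (hy i).monotoneOn) hφ hfix hdown hβ ht
  · exact le_fixedPoint_of_le_sum hy hφ hfix hup hβ ht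
end

section
/- Let h : ℝ → ℝ be differentiable and strictly increasing with h' > 0, let g_1,…,g_n : (0,∞) → ℝ be differentiable with g_i' > 0, and let y_1,…,y_n : (0,∞) → ℝ be strictly increasing concave functions with y_i(1/g_i'(x)) = g_i(x) for all x > 0. Let A : (0,∞)^n → (0,∞)^n be a map such that for every β ∈ (0,∞)^n the first-order conditions β_i · h'(∑_j g_j(A(β)_j)) · g_i'(A(β)_i) = 1 hold for all i, and suppose the map G(β) := ∑_i g_i(A(β)_i) satisfies: for every β and every t > G(β) there exists ζ with ζ_i > β_i for all i and G(ζ) = t, and for every t ≤ G(β) there exists ζ with ζ_i ≤ β_i for all i and G(ζ) = t. Then the induced production function F(β) := h(G(β)) = h(∑_i g_i(A(β)_i)) is quasiconcave on (0,∞)^n. -/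
/-!
By the first-order conditions, `β i * h'(G β) = 1 / g_i'(A β i)`, so the duality `y_i (1 / g_i') = g_i`
gives `∑ i, y_i (β i * h'(G β)) = G β`. Hence every point `ζ` of the level set `{G = t}` satisfies
`Y_t ζ = t` for the single function `Y_t ζ := ∑ i, y_i (ζ i * h'(t))`, which is concave and strictly
increasing in each coordinate. If `G (a β₁ + b β₂) < t := min (G β₁) (G β₂)`, pick `ζ₁ ≤ β₁`,
`ζ₂ ≤ β₂` on the level `t` and `ζ ≫ a β₁ + b β₂` on the level `t`: concavity gives
`t ≤ Y_t (a ζ₁ + b ζ₂)`, monotonicity gives `Y_t (a ζ₁ + b ζ₂) < Y_t ζ = t`. So `G`, and with it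
`h ∘ G`, is quasiconcave.
-/

open Finset Set

section PositiveOrthant

variable {ι : Type*}

theorem convex_pos_orthant : Convex ℝ {β : ι → ℝ | ∀ i, 0 < β i} :=
  fun _ hx _ hy _ _ ha hb hab i => convex_Ioi (0 : ℝ) (hx i) (hy i) ha hb hab

variable [Fintype ι] {y : ι → ℝ → ℝ}

theorem concaveOn_sum_comp_mul (hy : ∀ i, ConcaveOn ℝ (Ioi 0) (y i)) {c : ℝ} (hc : 0 < c) :
    ConcaveOn ℝ {ζ : ι → ℝ | ∀ i, 0 < ζ i} (fun ζ => ∑ i, y i (ζ i * c)) := by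
  refine ⟨convex_pos_orthant, fun ζ₁ hζ₁ ζ₂ hζ₂ a b ha hb hab => ?_⟩
  simp only [smul_eq_mul, mul_sum, ← sum_add_distrib]
  refine sum_le_sum fun i _ => ?_
  have hi := (hy i).2 (mul_pos (hζ₁ i) hc) (mul_pos (hζ₂ i) hc) ha hb hab
  simp only [smul_eq_mul] at hi
  convert hi using 2
  simp only [Pi.add_apply, Pi.smul_apply, smul_eq_mul]
  ring

theorem sum_comp_mul_lt_sum_comp_mul [Nonempty ι] (hy : ∀ i, StrictMonoOn (y i) (Ioi 0))
    {c : ℝ} (hc : 0 < c) {u v : ι → ℝ} (hu : ∀ i, 0 < u i) (huv : ∀ i, u i < v i) :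
    ∑ i, y i (u i * c) < ∑ i, y i (v i * c) :=
  sum_lt_sum_of_nonempty univ_nonempty fun i _ =>
    hy i (mul_pos (hu i) hc) (mul_pos ((hu i).trans (huv i)) hc)
      (mul_lt_mul_of_pos_right (huv i) hc)

theorem quasiconcaveOn_of_sum_comp_mul_eq (hymono : ∀ i, StrictMonoOn (y i) (Ioi 0))
    (hyconc : ∀ i, ConcaveOn ℝ (Ioi 0) (y i)) {φ : ℝ → ℝ} (hφ : ∀ t, 0 < φ t)
    {G : (ι → ℝ) → ℝ} (hG : ∀ β : ι → ℝ, (∀ i, 0 < β i) → ∑ i, y i (β i * φ (G β)) = G β)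
    (hup : ∀ β : ι → ℝ, (∀ i, 0 < β i) → ∀ t > G β,
      ∃ ζ : ι → ℝ, (∀ i, 0 < ζ i) ∧ (∀ i, β i < ζ i) ∧ G ζ = t)
    (hdown : ∀ β : ι → ℝ, (∀ i, 0 < β i) → ∀ t ≤ G β,
      ∃ ζ : ι → ℝ, (∀ i, 0 < ζ i) ∧ (∀ i, ζ i ≤ β i) ∧ G ζ = t) :
    QuasiconcaveOn ℝ {β : ι → ℝ | ∀ i, 0 < β i} G := by
  refine quasiconcaveOn_iff_min_le.2 ⟨convex_pos_orthant, fun β₁ hβ₁ β₂ hβ₂ a b ha hb hab => ?_⟩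
  have hμ : ∀ i, 0 < (a • β₁ + b • β₂) i := convex_pos_orthant hβ₁ hβ₂ ha hb hab
  rcases isEmpty_or_nonempty ι with hι | hι
  · have hG0 : ∀ β : ι → ℝ, (∀ i, 0 < β i) → G β = 0 := fun β hβ => by
      simpa using (hG β hβ).symm
    rw [hG0 β₁ hβ₁, hG0 _ hμ]
    exact min_le_left _ _
  by_contra! hlt
  set t := min (G β₁) (G β₂)
  obtain ⟨ζ, hζ, hμζ, hζt⟩ := hup _ hμ t hlt
  obtain ⟨ζ₁, hζ₁, hζ₁β, hζ₁t⟩ := hdown β₁ hβ₁ t (min_le_left _ _)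
  obtain ⟨ζ₂, hζ₂, hζ₂β, hζ₂t⟩ := hdown β₂ hβ₂ t (min_le_right _ _)
  set Y : (ι → ℝ) → ℝ := fun ζ => ∑ i, y i (ζ i * φ t)
  have hY : ∀ ζ : ι → ℝ, (∀ i, 0 < ζ i) → G ζ = t → Y ζ = t := fun ζ hζ hζt => by
    simp only [Y]
    rw [← hζt]
    exact hG ζ hζ
  have hconc : t ≤ Y (a • ζ₁ + b • ζ₂) := calc
    t = a • Y ζ₁ + b • Y ζ₂ := by
      rw [hY ζ₁ hζ₁ hζ₁t, hY ζ₂ hζ₂ hζ₂t, smul_eq_mul, smul_eq_mul, ← add_mul, hab, one_mul]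
    _ ≤ Y (a • ζ₁ + b • ζ₂) := (concaveOn_sum_comp_mul hyconc (hφ t)).2 hζ₁ hζ₂ ha hb hab
  have hlt' : Y (a • ζ₁ + b • ζ₂) < Y ζ := by
    refine sum_comp_mul_lt_sum_comp_mul hymono (hφ t)
      (convex_pos_orthant hζ₁ hζ₂ ha hb hab) fun i => ?_
    calc a * ζ₁ i + b * ζ₂ i ≤ a * β₁ i + b * β₂ i := by gcongr; exacts [hζ₁β i, hζ₂β i]
      _ < ζ i := hμζ i
  linarith [hY ζ hζ hζt]

end PositiveOrthant

theorem stmt_4_general (n : ℕ) (h : ℝ → ℝ)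
    (hmono : StrictMono h) (hh' : ∀ x, 0 < deriv h x)
    (g : Fin n → ℝ → ℝ)
    (hg' : ∀ i, ∀ x > (0:ℝ), 0 < deriv (g i) x)
    (y : Fin n → ℝ → ℝ)
    (hymono : ∀ i, StrictMonoOn (y i) (Set.Ioi 0))
    (hyconc : ∀ i, ConcaveOn ℝ (Set.Ioi 0) (y i))
    (hy : ∀ i, ∀ x > (0:ℝ), y i (1 / deriv (g i) x) = g i x)
    (A : (Fin n → ℝ) → (Fin n → ℝ))
    (hA : ∀ β : Fin n → ℝ, (∀ i, 0 < β i) → ∀ i, 0 < A β i)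
    (hFOC : ∀ β : Fin n → ℝ, (∀ i, 0 < β i) →
      ∀ i, β i * deriv h (∑ j, g j (A β j)) * deriv (g i) (A β i) = 1)
    (hup : ∀ β : Fin n → ℝ, (∀ i, 0 < β i) → ∀ t > ∑ i, g i (A β i),
      ∃ ζ : Fin n → ℝ, (∀ i, 0 < ζ i) ∧ (∀ i, β i < ζ i) ∧ ∑ i, g i (A ζ i) = t)
    (hdown : ∀ β : Fin n → ℝ, (∀ i, 0 < β i) → ∀ t ≤ ∑ i, g i (A β i),
      ∃ ζ : Fin n → ℝ, (∀ i, 0 < ζ i) ∧ (∀ i, ζ i ≤ β i) ∧ ∑ i, g i (A ζ i) = t) :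
    QuasiconcaveOn ℝ {β : Fin n → ℝ | ∀ i, 0 < β i}
      (fun β => h (∑ i, g i (A β i))) := by
  have hG : ∀ β : Fin n → ℝ, (∀ i, 0 < β i) →
      ∑ i, y i (β i * deriv h (∑ j, g j (A β j))) = ∑ i, g i (A β i) :=
    fun β hβ => sum_congr rfl fun i _ => by
      rw [(eq_div_iff (hg' i _ (hA β hβ i)).ne').2 (hFOC β hβ i), hy i _ (hA β hβ i)]
  exact (quasiconcaveOn_of_sum_comp_mul_eq hymono hyconc hh' hG hup hdown).monotone_comp
    hmono.monotone

/-- Quasiconcavity of the induced production function `F(β) = h(∑ i, g i (A β i))`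
for a strongly separable production function. -/
theorem stmt_4 (n : ℕ) (h : ℝ → ℝ) (hh : Differentiable ℝ h)
    (hmono : StrictMono h) (hh' : ∀ x, 0 < deriv h x)
    (g : Fin n → ℝ → ℝ)
    (hgdiff : ∀ i, ∀ x > (0:ℝ), DifferentiableAt ℝ (g i) x)
    (hg' : ∀ i, ∀ x > (0:ℝ), 0 < deriv (g i) x)
    (y : Fin n → ℝ → ℝ)
    (hymono : ∀ i, StrictMonoOn (y i) (Set.Ioi 0))
    (hyconc : ∀ i, ConcaveOn ℝ (Set.Ioi 0) (y i))
    (hy : ∀ i, ∀ x > (0:ℝ), y i (1 / deriv (g i) x) = g i x)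
    (A : (Fin n → ℝ) → (Fin n → ℝ))
    (hA : ∀ β : Fin n → ℝ, (∀ i, 0 < β i) → ∀ i, 0 < A β i)
    (hFOC : ∀ β : Fin n → ℝ, (∀ i, 0 < β i) →
      ∀ i, β i * deriv h (∑ j, g j (A β j)) * deriv (g i) (A β i) = 1)
    (hup : ∀ β : Fin n → ℝ, (∀ i, 0 < β i) → ∀ t > ∑ i, g i (A β i),
      ∃ ζ : Fin n → ℝ, (∀ i, 0 < ζ i) ∧ (∀ i, β i < ζ i) ∧ ∑ i, g i (A ζ i) = t)
    (hdown : ∀ β : Fin n → ℝ, (∀ i, 0 < β i) → ∀ t ≤ ∑ i, g i (A β i),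
      ∃ ζ : Fin n → ℝ, (∀ i, 0 < ζ i) ∧ (∀ i, ζ i ≤ β i) ∧ ∑ i, g i (A ζ i) = t) :
    QuasiconcaveOn ℝ {β : Fin n → ℝ | ∀ i, 0 < β i}
      (fun β => h (∑ i, g i (A β i))) :=
  stmt_4_general n h hmono hh' g hg' y hymono hyconc hy A hA hFOC hup hdown
end

section
/- Fix n ≥ 1, constants c_1,…,c_n > 0, a substitution parameter r < 0, and a returns-to-scale parameter d with 0 < d < 1. Then the function F : (0,∞)^n → ℝ defined by F(β) = [∑_{i=1}^n c_i · β_i^{r/(1−r)}]^{((r−1)/r)·(d/(d−1))} is quasiconcave on the open positive orthant (0,∞)^n. -/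
open Set Real

/-- `x ↦ x ^ p` is convex on `(0, ∞)` for `p < 0`. -/
lemma convexOn_rpow_neg {p : ℝ} (hp : p < 0) :
    ConvexOn ℝ (Ioi (0:ℝ)) fun x : ℝ => x ^ p := by
  have hInt : interior (Ioi (0:ℝ)) = Ioi 0 := interior_Ioi
  refine convexOn_of_hasDerivWithinAt2_nonneg (f' := fun x => p * x ^ (p - 1))
    (f'' := fun x => p * ((p - 1) * x ^ (p - 2))) (convex_Ioi 0) ?_ ?_ ?_ ?_
  · exact fun x hx =>
      ((Real.continuousAt_rpow_const x p (Or.inl (ne_of_gt hx))).continuousWithinAt)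
  · intro x hx
    rw [hInt] at hx ⊢
    exact (Real.hasDerivAt_rpow_const (Or.inl (ne_of_gt hx))).hasDerivWithinAt
  · intro x hx
    rw [hInt] at hx ⊢
    have h := ((Real.hasDerivAt_rpow_const (p := p - 1)
      (Or.inl (ne_of_gt hx))).const_mul p).hasDerivWithinAt (s := Ioi (0:ℝ))
    have e : p - 1 - 1 = p - 2 := by ring
    rw [e] at h
    exact h
  · intro x hx
    rw [hInt] at hx
    have hxp : (0:ℝ) < x ^ (p - 2) := Real.rpow_pos_of_pos hx _
    show (0:ℝ) ≤ p * ((p - 1) * x ^ (p - 2))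
    have h3 := mul_pos (mul_pos (neg_pos.mpr hp) (by linarith : (0:ℝ) < 1 - p)) hxp
    nlinarith [h3]

/-- The induced production function of a CES production with negative substitution
parameter is quasiconcave on the open positive orthant. -/
theorem stmt_5 (n : ℕ) (hn : 1 ≤ n) (c : Fin n → ℝ) (hc : ∀ i, 0 < c i)
    (r d : ℝ) (hr : r < 0) (hd0 : 0 < d) (hd1 : d < 1) :
    QuasiconcaveOn ℝ {β : Fin n → ℝ | ∀ i, 0 < β i}
      (fun β => (∑ i, c i * β i ^ (r / (1 - r))) ^ ((r - 1) / r * (d / (d - 1)))) := by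
  set s : ℝ := r / (1 - r) with hs_def
  set p : ℝ := (r - 1) / r * (d / (d - 1)) with hp_def
  have h1r : (0:ℝ) < 1 - r := by linarith
  have hs_neg : s < 0 := div_neg_of_neg_of_pos hr h1r
  have hp_neg : p < 0 := by
    apply mul_neg_of_pos_of_neg
    · exact div_pos_of_neg_of_neg (by linarith) hr
    · exact div_neg_of_pos_of_neg hd0 (by linarith)
  set S : Set (Fin n → ℝ) := {β : Fin n → ℝ | ∀ i, 0 < β i} with hS_def
  have hSconv : Convex ℝ S := by
    have : S = Set.pi Set.univ (fun _ : Fin n => Ioi (0:ℝ)) := by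
      ext β; simp [Set.mem_pi, hS_def]
    rw [this]
    exact convex_pi fun i _ => convex_Ioi 0
  set G : (Fin n → ℝ) → ℝ := fun β => ∑ i, c i * β i ^ s with hG_def
  have hGpos : ∀ β ∈ S, 0 < G β := by
    intro β hβ
    apply Finset.sum_pos
    · intro i _
      exact mul_pos (hc i) (Real.rpow_pos_of_pos (hβ i) _)
    · exact ⟨⟨0, hn⟩, Finset.mem_univ _⟩
  -- G is convex on S
  have hGconv : ConvexOn ℝ S G := by
    have hterm : ∀ i : Fin n, ConvexOn ℝ S (fun β : Fin n → ℝ => c i * β i ^ s) := by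
      intro i
      have hcomp := (convexOn_rpow_neg hs_neg).comp_linearMap
        (LinearMap.proj (R := ℝ) (φ := fun _ : Fin n => ℝ) i)
      have hsub : S ⊆ ⇑(LinearMap.proj (R := ℝ) (φ := fun _ : Fin n => ℝ) i) ⁻¹' Ioi (0:ℝ) :=
        fun β hβ => hβ i
      exact ((hcomp.subset hsub hSconv).smul (hc i).le).congr (by
        intro β _; simp [Function.comp, smul_eq_mul])
    have := Finset.univ.sum_induction (fun i => fun β : Fin n → ℝ => c i * β i ^ s)
      (ConvexOn ℝ S) (fun f g hf hg => hf.add hg)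
      (by exact convexOn_const (0:ℝ) hSconv) (fun i _ => hterm i)
    exact this.congr (by intro β _; simp [hG_def])
  -- prove superlevel sets convex
  intro b
  rcases le_or_gt b 0 with hb | hb
  · convert hSconv using 1
    ext β
    simp only [Set.mem_sep_iff]
    constructor
    · exact fun h => h.1
    · intro h
      exact ⟨h, hb.trans (Real.rpow_pos_of_pos (hGpos β h) p).le⟩
  · convert hGconv.convex_le (b ^ p⁻¹) using 1
    ext β
    simp only [Set.mem_sep_iff]
    constructor
    · rintro ⟨hβ, hle⟩
      refine ⟨hβ, ?_⟩
      have h2 := Real.rpow_le_rpow_of_nonpos hb hle (inv_nonpos.mpr hp_neg.le)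
      rwa [← Real.rpow_mul (hGpos β hβ).le, mul_inv_cancel₀ hp_neg.ne,
        Real.rpow_one] at h2
    · rintro ⟨hβ, hle⟩
      refine ⟨hβ, ?_⟩
      have h2 := Real.rpow_le_rpow_of_nonpos (hGpos β hβ) hle hp_neg.le
      rwa [← Real.rpow_mul hb.le, inv_mul_cancel₀ hp_neg.ne,
        Real.rpow_one] at h2
end

section
/- Fix n ≥ 1, constants k_1,…,k_n > 0, r < 0, and d with 0 < d < 1. Suppose β ∈ (0,∞)^n and a ∈ (0,∞)^n satisfy the first-order conditions β_i · d · (∑_{j=1}^n k_j a_j^r)^{d/r − 1} · k_i · a_i^{r−1} = 1 for every i. Then (∑_{i=1}^n k_i a_i^r)^{d/r} = [∑_{i=1}^n (k_i β_i^r d^r)^{1/(1−r)}]^{((r−1)/r)·(d/(d−1))}. -/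
/-- Closed form of the induced production function for the CES production
`f(a) = (∑ i, k i * a i ^ r) ^ (d / r)` with `r < 0` and `0 < d < 1`. -/
theorem stmt_7 (n : ℕ) (hn : 1 ≤ n) (k : Fin n → ℝ) (hk : ∀ i, 0 < k i)
    (r d : ℝ) (hr : r < 0) (hd0 : 0 < d) (hd1 : d < 1)
    (β a : Fin n → ℝ) (hβ : ∀ i, 0 < β i) (ha : ∀ i, 0 < a i)
    (hFOC : ∀ i, β i * d * (∑ j, k j * a j ^ r) ^ (d / r - 1) * k i * a i ^ (r - 1) = 1) :
    (∑ i, k i * a i ^ r) ^ (d / r) =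
      (∑ i, (k i * β i ^ r * d ^ r) ^ (1 / (1 - r))) ^ ((r - 1) / r * (d / (d - 1))) := by
  have hne : Nonempty (Fin n) := ⟨⟨0, hn⟩⟩
  have hr0 : r ≠ 0 := ne_of_lt hr
  have hr1 : (0:ℝ) < 1 - r := by linarith
  set S := ∑ j, k j * a j ^ r with hS
  have hSpos : 0 < S :=
    Finset.sum_pos (fun i _ => mul_pos (hk i) (Real.rpow_pos_of_pos (ha i) r))
      Finset.univ_nonempty
  clear_value S
  -- per-term identity
  have hterm : ∀ i, k i * a i ^ r
      = (k i * β i ^ r * d ^ r) ^ (1 / (1 - r)) * S ^ ((d - r) / (1 - r)) := by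
    intro i
    have hbi := hβ i
    have hai := ha i
    have hki := hk i
    have hkb : 0 < k i * β i ^ r * d ^ r :=
      mul_pos (mul_pos (hk i) (Real.rpow_pos_of_pos (hβ i) r))
        (Real.rpow_pos_of_pos hd0 r)
    have hlhs : 0 < k i * a i ^ r := mul_pos (hk i) (Real.rpow_pos_of_pos (ha i) r)
    have hrhs : 0 < (k i * β i ^ r * d ^ r) ^ (1 / (1 - r)) * S ^ ((d - r) / (1 - r)) :=
      mul_pos (Real.rpow_pos_of_pos hkb _) (Real.rpow_pos_of_pos hSpos _)
    -- log of FOC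
    have hFl : Real.log (β i) + Real.log d + (d / r - 1) * Real.log S
        + Real.log (k i) + (r - 1) * Real.log (a i) = 0 := by
      have h1 := congrArg Real.log (hFOC i)
      rw [Real.log_one] at h1
      rw [Real.log_mul (by positivity) (by positivity),
          Real.log_mul (by positivity) (by positivity),
          Real.log_mul (by positivity) (by positivity),
          Real.log_mul (by positivity) (by positivity),
          Real.log_rpow hSpos, Real.log_rpow (ha i)] at h1
      linarith
    have hl : Real.log (k i * a i ^ r)
        = Real.log ((k i * β i ^ r * d ^ r) ^ (1 / (1 - r)) * S ^ ((d - r) / (1 - r))) := by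
      rw [Real.log_mul (by positivity) (by positivity),
          Real.log_rpow (ha i),
          Real.log_mul (by positivity) (by positivity),
          Real.log_rpow hkb, Real.log_rpow hSpos,
          Real.log_mul (by positivity) (by positivity),
          Real.log_mul (by positivity) (by positivity),
          Real.log_rpow (hβ i), Real.log_rpow hd0]
      have h1r : (1:ℝ) - r ≠ 0 := ne_of_gt hr1
      field_simp at hFl ⊢
      linear_combination (-1 : ℝ) * hFl
    exact Real.log_injOn_pos (Set.mem_Ioi.mpr hlhs) (Set.mem_Ioi.mpr hrhs) hl
  set T := ∑ i, (k i * β i ^ r * d ^ r) ^ (1 / (1 - r)) with hT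
  have hTpos : 0 < T :=
    Finset.sum_pos
      (fun i _ => Real.rpow_pos_of_pos
        (mul_pos (mul_pos (hk i) (Real.rpow_pos_of_pos (hβ i) r))
          (Real.rpow_pos_of_pos hd0 r)) _)
      Finset.univ_nonempty
  have hsum : S = T * S ^ ((d - r) / (1 - r)) := by
    calc S = ∑ i, k i * a i ^ r := hS
      _ = ∑ i, (k i * β i ^ r * d ^ r) ^ (1 / (1 - r)) * S ^ ((d - r) / (1 - r)) :=
            Finset.sum_congr rfl (fun i _ => hterm i)
      _ = T * S ^ ((d - r) / (1 - r)) := by rw [← Finset.sum_mul]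
  have hTS : T = S ^ ((1 - d) / (1 - r)) := by
    have h2 : S ^ ((1 - d) / (1 - r)) * S ^ ((d - r) / (1 - r)) = S := by
      rw [← Real.rpow_add hSpos]
      have : (1 - d) / (1 - r) + (d - r) / (1 - r) = 1 := by
        field_simp
        ring
      rw [this, Real.rpow_one]
    have hγ : (0:ℝ) < S ^ ((d - r) / (1 - r)) := Real.rpow_pos_of_pos hSpos _
    apply mul_right_cancel₀ (ne_of_gt hγ)
    rw [h2, ← hsum]
  rw [hTS]
  rw [← Real.rpow_mul (le_of_lt hSpos)]
  congr 1
  have hd1' : d - 1 ≠ 0 := by linarith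
  field_simp
  ring
end

section
/- Fix n ≥ 1 and constants k_1,…,k_n > 0 with ∑_{i=1}^n k_i < 1. Define the principal's utility U on the domain D = {β ∈ (0,∞)^n : ∑_i β_i < 1} by U(β) = (1 − ∑_{i=1}^n β_i) · [∏_{i=1}^n (k_i β_i)^{k_i}]^{1/(1 − ∑_{j=1}^n k_j)}. Then the contract β* with β*_i = k_i for every i maximizes U over D; that is, U(β) ≤ U(β*) for all β ∈ D. -/
/-!
Weighted AM-GM with weights `k i` on the ratios `β i / k i` and weight `1 - ∑ k` on the ratio
`(1 - ∑ β) / (1 - ∑ k)` bounds `(1 - ∑ β) ^ (1 - ∑ k) * ∏ β i ^ k i` by its value at `β = k`.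
Taking `(1 - ∑ k)`-th roots and pulling the constant factor `∏ k i ^ k i` out of the induced
production turns this into the optimality of `β = k`.
-/

open Finset

section

variable {ι : Type*}

theorem Real.prod_rpow_le_prod_rpow_self (s : Finset ι) {w x : ι → ℝ}
    (hw : ∀ i ∈ s, 0 < w i) (hx : ∀ i ∈ s, 0 ≤ x i)
    (hw1 : ∑ i ∈ s, w i = 1) (hx1 : ∑ i ∈ s, x i ≤ 1) :
    ∏ i ∈ s, x i ^ w i ≤ ∏ i ∈ s, w i ^ w i := by
  have hpos : 0 < ∏ i ∈ s, w i ^ w i :=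
    prod_pos fun i hi => Real.rpow_pos_of_pos (hw i hi) _
  have amgm := Real.geom_mean_le_arith_mean_weighted s w (fun i => x i / w i)
    (fun i hi => (hw i hi).le) hw1 (fun i hi => div_nonneg (hx i hi) (hw i hi).le)
  rw [prod_congr rfl fun i hi => Real.div_rpow (hx i hi) (hw i hi).le (w i), prod_div_distrib,
    sum_congr rfl fun i hi => mul_div_cancel₀ (x i) (hw i hi).ne', div_le_iff₀ hpos] at amgm
  exact amgm.trans (mul_le_of_le_one_left hpos.le hx1)

theorem Real.one_sub_sum_rpow_mul_prod_rpow_le [Fintype ι] {w x : ι → ℝ}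
    (hw : ∀ i, 0 < w i) (hx : ∀ i, 0 ≤ x i) (hw1 : ∑ i, w i < 1) (hx1 : ∑ i, x i ≤ 1) :
    (1 - ∑ i, x i) ^ (1 - ∑ i, w i) * ∏ i, x i ^ w i ≤
      (1 - ∑ i, w i) ^ (1 - ∑ i, w i) * ∏ i, w i ^ w i := by
  simpa [Fintype.prod_option, Fintype.sum_option] using
    Real.prod_rpow_le_prod_rpow_self univ
      (w := fun o : Option ι => o.elim (1 - ∑ i, w i) w)
      (x := fun o : Option ι => o.elim (1 - ∑ i, x i) x)
      (by rintro (_ | i) _ <;> simp [hw, hw1]) (by rintro (_ | i) _ <;> simp [hx, hx1])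
      (by simp [Fintype.sum_option]) (by simp [Fintype.sum_option])

theorem Real.mul_rpow_inv_le_of_rpow_mul_le {a b x y p : ℝ} (ha : 0 ≤ a) (hb : 0 ≤ b)
    (hx : 0 ≤ x) (hy : 0 ≤ y) (hp : 0 < p) (h : a ^ p * x ≤ b ^ p * y) :
    a * x ^ (1 / p) ≤ b * y ^ (1 / p) := by
  have := Real.rpow_le_rpow (by positivity) h (one_div_pos.2 hp).le
  rw [Real.mul_rpow (by positivity) hx, Real.mul_rpow (by positivity) hy, one_div,
    Real.rpow_rpow_inv ha hp.ne', Real.rpow_rpow_inv hb hp.ne'] at this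
  rwa [one_div]

variable [Fintype ι]

noncomputable def principalUtility (k β : ι → ℝ) : ℝ :=
  (1 - ∑ i, β i) * (∏ i, (k i * β i) ^ (k i)) ^ (1 / (1 - ∑ j, k j))

theorem principalUtility_eq {k β : ι → ℝ} (hk : ∀ i, 0 ≤ k i) (hβ : ∀ i, 0 ≤ β i) :
    principalUtility k β = (∏ i, k i ^ k i) ^ (1 / (1 - ∑ j, k j)) *
      ((1 - ∑ i, β i) * (∏ i, β i ^ k i) ^ (1 / (1 - ∑ j, k j))) := by
  rw [principalUtility, prod_congr rfl fun i _ => Real.mul_rpow (hk i) (hβ i), prod_mul_distrib,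
    Real.mul_rpow (prod_nonneg fun i _ => Real.rpow_nonneg (hk i) _)
      (prod_nonneg fun i _ => Real.rpow_nonneg (hβ i) _)]
  ring

theorem principalUtility_le_principalUtility_self {k β : ι → ℝ} (hk : ∀ i, 0 < k i)
    (hk1 : ∑ i, k i < 1) (hβ : ∀ i, 0 ≤ β i) (hβ1 : ∑ i, β i ≤ 1) :
    principalUtility k β ≤ principalUtility k k := by
  have hk0 : ∀ i, 0 ≤ k i := fun i => (hk i).le
  have hprod : 0 ≤ ∏ i, k i ^ k i := prod_nonneg fun i _ => Real.rpow_nonneg (hk0 i) _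
  rw [principalUtility_eq hk0 hβ, principalUtility_eq hk0 hk0]
  refine mul_le_mul_of_nonneg_left ?_ (Real.rpow_nonneg hprod _)
  exact Real.mul_rpow_inv_le_of_rpow_mul_le (by linarith) (by linarith)
    (prod_nonneg fun i _ => Real.rpow_nonneg (hβ i) _) hprod (by linarith)
    (Real.one_sub_sum_rpow_mul_prod_rpow_le hk hβ hk1 hβ1)

end

theorem stmt_9_general (n : ℕ) (k : Fin n → ℝ) (hk : ∀ i, 0 < k i)
    (hsum : ∑ i, k i < 1)
    (β : Fin n → ℝ) (hβ : ∀ i, 0 < β i) (hβsum : ∑ i, β i < 1) :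
    (1 - ∑ i, β i) * (∏ i, (k i * β i) ^ (k i)) ^ (1 / (1 - ∑ j, k j)) ≤
      (1 - ∑ i, k i) * (∏ i, (k i * k i) ^ (k i)) ^ (1 / (1 - ∑ j, k j)) :=
  principalUtility_le_principalUtility_self hk hsum (fun i => (hβ i).le) hβsum.le

/-- For the Cobb-Douglas production, the optimal contract is `β i = k i`:
it maximizes the principal's utility
`U(β) = (1 - ∑ i, β i) * (∏ i, (k i * β i) ^ (k i)) ^ (1 / (1 - ∑ j, k j))`
over `D = {β ∈ (0,∞)ⁿ : ∑ i, β i < 1}`. -/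
theorem stmt_9 (n : ℕ) (hn : 1 ≤ n) (k : Fin n → ℝ) (hk : ∀ i, 0 < k i)
    (hsum : ∑ i, k i < 1)
    (β : Fin n → ℝ) (hβ : ∀ i, 0 < β i) (hβsum : ∑ i, β i < 1) :
    (1 - ∑ i, β i) * (∏ i, (k i * β i) ^ (k i)) ^ (1 / (1 - ∑ j, k j)) ≤
      (1 - ∑ i, k i) * (∏ i, (k i * k i) ^ (k i)) ^ (1 / (1 - ∑ j, k j)) :=
  stmt_9_general n k hk hsum β hβ hβsum
end

section
/- Fix k > 0 and r < 0, and let g : (0,∞) → ℝ be given by g(a) = −k·a^r. Then the function y : (0,∞) → ℝ defined by y(t) = −k^{1/(1−r)} · (−r·t)^{r/(1−r)} is strictly increasing and concave on (0,∞), and satisfies y(1/g'(a)) = g(a) for every a > 0, where g'(a) = −k·r·a^{r−1}. -/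
private lemma aux12_hasDerivAt (c b p : ℝ) {t : ℝ} (h : 0 < b * t) :
    HasDerivAt (fun t => c * (b * t) ^ p) (c * (p * (b * t) ^ (p - 1) * b)) t := by
  have h1 : HasDerivAt (fun x : ℝ => x ^ p) (p * (b * t) ^ (p - 1)) (b * t) :=
    Real.hasDerivAt_rpow_const (Or.inl (ne_of_gt h))
  have h2 : HasDerivAt (fun t : ℝ => b * t) b t := by
    simpa using (hasDerivAt_id t).const_mul b
  exact (h1.comp t h2).const_mul c

/-- For `g(a) = -k * a ^ r` with `k > 0` and `r < 0`, the function
`y(t) = -k ^ (1/(1-r)) * (-r * t) ^ (r/(1-r))` is strictly increasing and concave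
on `(0,∞)` and satisfies `y (1 / g' a) = g a` for all `a > 0`,
where `g' a = -k * r * a ^ (r - 1)`. -/
theorem stmt_12 (k r : ℝ) (hk : 0 < k) (hr : r < 0)
    (g y : ℝ → ℝ)
    (hg : ∀ a : ℝ, g a = -k * a ^ r)
    (hy : ∀ t : ℝ, y t = -(k ^ (1 / (1 - r))) * (-r * t) ^ (r / (1 - r))) :
    (∀ a ∈ Set.Ioi (0:ℝ), deriv g a = -k * r * a ^ (r - 1)) ∧
      StrictMonoOn y (Set.Ioi 0) ∧
      ConcaveOn ℝ (Set.Ioi 0) y ∧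
      (∀ a ∈ Set.Ioi (0:ℝ), y (1 / (-k * r * a ^ (r - 1))) = g a) := by
  have hs : (0:ℝ) < 1 - r := by linarith
  set C : ℝ := k ^ (1 / (1 - r)) with hC
  set e : ℝ := r / (1 - r) with he
  have hCpos : 0 < C := Real.rpow_pos_of_pos hk _
  have hepos : e < 0 := div_neg_of_neg_of_pos hr hs
  have hnr : (0:ℝ) < -r := by linarith
  have hyfun : y = fun t => -C * (-r * t) ^ e := funext fun t => hy t
  -- derivative of y on positive reals
  have hyderiv : ∀ t : ℝ, 0 < t →
      HasDerivAt y (-C * (e * (-r * t) ^ (e - 1) * -r)) t := by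
    intro t ht
    rw [hyfun]
    exact aux12_hasDerivAt (-C) (-r) e (mul_pos hnr ht)
  have hderivpos : ∀ t : ℝ, 0 < t → 0 < -C * (e * (-r * t) ^ (e - 1) * -r) := by
    intro t ht
    have hrp : 0 < (-r * t) ^ (e - 1) := Real.rpow_pos_of_pos (mul_pos hnr ht) _
    have h' : 0 < C * -e * (-r * t) ^ (e - 1) * -r :=
      mul_pos (mul_pos (mul_pos hCpos (neg_pos.mpr hepos)) hrp) hnr
    nlinarith [h']
  have hcont : ContinuousOn y (Set.Ioi 0) := fun t ht =>
    (hyderiv t ht).continuousAt.continuousWithinAt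
  refine ⟨?_, ?_, ?_, ?_⟩
  · -- deriv g
    intro a ha
    have ha' : (0:ℝ) < a := ha
    have h1 : HasDerivAt g (-k * (r * a ^ (r - 1) * 1)) a := by
      have := aux12_hasDerivAt (-k) 1 r (t := a) (by simpa using ha')
      simpa [funext hg] using this
    rw [h1.deriv]; ring
  · -- strict mono
    refine strictMonoOn_of_deriv_pos (convex_Ioi 0) hcont ?_
    intro t ht
    rw [interior_Ioi] at ht
    rw [(hyderiv t ht).deriv]
    exact hderivpos t ht
  · -- concave
    refine concaveOn_of_hasDerivWithinAt2_nonpos (convex_Ioi 0) hcont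
      (f' := fun t => -C * (e * (-r * t) ^ (e - 1) * -r))
      (f'' := fun t => (-C * (e * -r)) * ((e - 1) * (-r * t) ^ (e - 1 - 1) * -r))
      ?_ ?_ ?_
    · intro t ht
      rw [interior_Ioi] at ht
      exact (hyderiv t ht).hasDerivWithinAt
    · intro t ht
      rw [interior_Ioi] at ht
      have h := aux12_hasDerivAt (-C * (e * -r)) (-r) (e - 1) (t := t) (mul_pos hnr ht)
      refine (h.congr_of_eventuallyEq ?_).hasDerivWithinAt
      filter_upwards with s
      ring
    · intro t ht
      rw [interior_Ioi] at ht
      have hrp : 0 < (-r * t) ^ (e - 1 - 1) := Real.rpow_pos_of_pos (mul_pos hnr ht) _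
      show -C * (e * -r) * ((e - 1) * (-r * t) ^ (e - 1 - 1) * -r) ≤ 0
      have h1 : e - 1 < 0 := by linarith
      have h' : 0 < (C * -e * -r) * ((1 - e) * (-r * t) ^ (e - 1 - 1) * -r) :=
        mul_pos (mul_pos (mul_pos hCpos (neg_pos.mpr hepos)) hnr)
          (mul_pos (mul_pos (by linarith) hrp) hnr)
      nlinarith [h']
  · -- the identity
    intro a ha
    have ha' : (0:ℝ) < a := ha
    have har : 0 < a ^ (r - 1) := Real.rpow_pos_of_pos ha' _
    have hg' : (0:ℝ) < -k * r * a ^ (r - 1) := by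
      have h' : 0 < k * -r * a ^ (r - 1) := mul_pos (mul_pos hk hnr) har
      nlinarith [h']
    rw [hy, hg]
    have hbase : -r * (1 / (-k * r * a ^ (r - 1))) = k⁻¹ * (a ^ (r - 1))⁻¹ := by
      rw [mul_one_div, div_eq_iff hg'.ne']
      field_simp
    rw [hbase]
    have h1 : (k⁻¹ * (a ^ (r - 1))⁻¹) ^ e = k ^ (-e) * a ^ r := by
      rw [Real.mul_rpow (by positivity) (by positivity), Real.inv_rpow hk.le,
        ← Real.rpow_neg hk.le, ← Real.rpow_neg ha'.le, ← Real.rpow_mul ha'.le]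
      congr 1
      rw [he]
      congr 1
      rw [neg_sub]
      field_simp
    rw [h1]
    have h2 : 1 / (1 - r) + -e = 1 := by
      rw [he]; field_simp; ring
    have h3 : C * k ^ (-e) = k := by
      rw [hC, ← Real.rpow_add hk, h2, Real.rpow_one]
    linear_combination (-(a ^ r)) * h3
end
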